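/- Let Θ ⊆ I be a finite set of sampled directions. Suppose the feasible set F₄(Θ) of the sampled problem P4 contains a pair (W₀, Σ₀) in which both W₀ and Σ₀ are positive definite (i.e. rank(W₀) = rank(Σ₀) = m). Then every optimal solution of P4, i.e. every (Ŵ, Σ̂) ∈ F₄(Θ) with g₃(Ŵ, Σ̂) = inf {g₃(W, Σ) : (W, Σ) ∈ F₄(Θ)}, satisfies rank(Ŵ) = 1. -/

import Mathlib

open Matrix
open scoped ComplexOrder

/-- Outer-product channel matrix `H(θ) = h(θ) h(θ)ᴴ`. -/
noncomputable def Hm {m : ℕ} (h : ℝ → Fin m → ℂ) (θ : ℝ) : Matrix (Fin m) (Fin m) ℂ :=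
  vecMulVec (h θ) (star (h θ))

/-- Objective of P3 (and of the sampled problem P4): `Tr(W) + Tr(Σ)`. -/
noncomputable def g3 {m : ℕ}
    (p : Matrix (Fin m) (Fin m) ℂ × Matrix (Fin m) (Fin m) ℂ) : ℝ :=
  p.1.trace.re + p.2.trace.re

/-- Objective of P2 (and of P1): `‖w‖² + Tr(Σ)`. -/
noncomputable def g2 {m : ℕ} (p : (Fin m → ℂ) × Matrix (Fin m) (Fin m) ℂ) : ℝ :=
  (star p.1 ⬝ᵥ p.1).re + p.2.trace.re

/-- Feasible set of the SDP relaxation P3 (for a set `I` of adversary directions);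
with a finite sample set `Θ` in place of `I` it is the feasible set `F₄(Θ)` of P4. -/
def F3 {m : ℕ} (h : ℝ → Fin m → ℂ) (γc γa σ2 P θc : ℝ) (I : Set ℝ) :
    Set (Matrix (Fin m) (Fin m) ℂ × Matrix (Fin m) (Fin m) ℂ) :=
  {p | p.1.PosSemidef ∧ p.2.PosSemidef ∧
    γc * ((Hm h θc * p.2).trace.re + σ2) ≤ (Hm h θc * p.1).trace.re ∧
    (∀ θ ∈ I, (Hm h θ * p.1).trace.re ≤ γa * ((Hm h θ * p.2).trace.re + σ2)) ∧
    (∀ i, (p.1 i i).re + (p.2 i i).re ≤ P)}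

/-- Feasible set of problem P2 (for a set `I` of adversary directions);
with the union of all adversary intervals in place of `I` it is the feasible set of P1. -/
def F2 {m : ℕ} (h : ℝ → Fin m → ℂ) (γc γa σ2 P θc : ℝ) (I : Set ℝ) :
    Set ((Fin m → ℂ) × Matrix (Fin m) (Fin m) ℂ) :=
  {p | p.2.PosSemidef ∧
    γc * ((Hm h θc * p.2).trace.re + σ2) ≤ (star p.1 ⬝ᵥ (Hm h θc).mulVec p.1).re ∧
    (∀ θ ∈ I, (star p.1 ⬝ᵥ (Hm h θ).mulVec p.1).re ≤ γa * ((Hm h θ * p.2).trace.re + σ2)) ∧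
    (∀ i, Complex.normSq (p.1 i) + (p.2 i i).re ≤ P)}

/-! Let `x = h θc` and let `(Ŵ, Σ̂)` be optimal. The client constraint forces `xᴴ Ŵ x > 0`, so
`W' = Ŵ x xᴴ Ŵ / (xᴴ Ŵ x)` is a rank-one matrix with `xᴴ W' x = xᴴ Ŵ x`, and Cauchy–Schwarz for the
semi-inner product `(u, v) ↦ uᴴ Ŵ v` gives `W' ≤ Ŵ` in the Loewner order. Hence `(W', Σ̂)` is still
feasible: the client gain is unchanged while the adversary gains and the diagonal entries can only
drop. Optimality gives `Tr Ŵ ≤ Tr W'`, and a positive semidefinite `Ŵ - W'` of nonpositive trace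
vanishes, so `Ŵ = W'` has rank one. -/

namespace Matrix

variable {n : Type*} [Fintype n]

lemma trace_vecMulVec_mul {R : Type*} [CommSemiring R] (a b : n → R) (M : Matrix n n R) :
    (vecMulVec a b * M).trace = b ⬝ᵥ M *ᵥ a := by
  rw [vecMulVec_mul, trace_vecMulVec, dotProduct_comm, dotProduct_mulVec]

lemma rank_pos_of_ne_zero {K m : Type*} [Field K] [Fintype m] {A : Matrix m n K} (hA : A ≠ 0) :
    0 < A.rank := by
  classical
  rw [rank, Module.finrank_pos_iff_exists_ne_zero]
  obtain ⟨v, hv⟩ := DFunLike.ne_iff.mp ((map_ne_zero_iff _ toLin'.injective).mpr hA)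
  exact ⟨⟨_, v, rfl⟩, by simpa using hv⟩

variable {𝕜 : Type*} [RCLike 𝕜] {W : Matrix n n 𝕜}

open RCLike

lemma PosSemidef.ofReal_re_dotProduct_mulVec (hW : W.PosSemidef) (x : n → 𝕜) :
    (re (star x ⬝ᵥ W *ᵥ x) : 𝕜) = star x ⬝ᵥ W *ᵥ x :=
  conj_eq_iff_re.mp <| conj_eq_iff_im.mpr (nonneg_iff.mp (hW.dotProduct_mulVec_nonneg x)).2

lemma PosSemidef.norm_sq_dotProduct_mulVec_le (hW : W.PosSemidef) (x y : n → 𝕜) :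
    ‖star x ⬝ᵥ W *ᵥ y‖ ^ 2 ≤ re (star x ⬝ᵥ W *ᵥ x) * re (star y ⬝ᵥ W *ᵥ y) := by
  let _ := W.toSeminormedAddCommGroup hW
  let _ := W.toInnerProductSpace hW
  have hinner : ∀ u v : n → 𝕜, inner 𝕜 u v = star u ⬝ᵥ W *ᵥ v := fun u v => dotProduct_comm _ _
  have hcs := pow_le_pow_left₀ (norm_nonneg _) (norm_inner_le_norm (𝕜 := 𝕜) x y) 2
  rw [mul_pow, norm_sq_eq_re_inner (𝕜 := 𝕜) x, norm_sq_eq_re_inner (𝕜 := 𝕜) y] at hcs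
  simpa only [hinner] using hcs

lemma PosSemidef.eq_of_sub_of_re_trace_le {A B : Matrix n n 𝕜} (hAB : (B - A).PosSemidef)
    (htr : re B.trace ≤ re A.trace) : B = A := by
  have hnonneg := nonneg_iff.mp hAB.trace_nonneg
  rw [← sub_eq_zero, ← hAB.trace_eq_zero_iff]
  refine RCLike.ext (le_antisymm ?_ ?_) ?_ <;> simp_all [trace_sub]

lemma dotProduct_vecMulVec_star_mulVec (v y : n → 𝕜) :
    star y ⬝ᵥ vecMulVec v (star v) *ᵥ y = (‖star y ⬝ᵥ v‖ : 𝕜) ^ 2 := by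
  rw [vecMulVec_mulVec, op_smul_eq_smul, dotProduct_smul, smul_eq_mul, star_dotProduct,
    ← RCLike.conj_mul]
  rfl

-- The rank-one Nyström approximation `W x xᴴ W / (xᴴ W x)` of `W`; it is `0` when `xᴴ W x = 0`.
noncomputable def rankOneNystrom (W : Matrix n n 𝕜) (x : n → 𝕜) : Matrix n n 𝕜 :=
  (re (star x ⬝ᵥ W *ᵥ x))⁻¹ • vecMulVec (W *ᵥ x) (star (W *ᵥ x))

lemma rank_rankOneNystrom_le (W : Matrix n n 𝕜) (x : n → 𝕜) :
    (rankOneNystrom W x).rank ≤ 1 := by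
  rw [rankOneNystrom, ← smul_vecMulVec]
  exact rank_vecMulVec_le _ _

lemma dotProduct_rankOneNystrom_mulVec (W : Matrix n n 𝕜) (x y : n → 𝕜) :
    star y ⬝ᵥ rankOneNystrom W x *ᵥ y =
      (((re (star x ⬝ᵥ W *ᵥ x))⁻¹ * ‖star y ⬝ᵥ W *ᵥ x‖ ^ 2 : ℝ) : 𝕜) := by
  rw [rankOneNystrom, smul_mulVec, dotProduct_smul, dotProduct_vecMulVec_star_mulVec,
    real_smul_eq_coe_mul]
  push_cast
  rfl

lemma posSemidef_rankOneNystrom (hW : W.PosSemidef) (x : n → 𝕜) :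
    (rankOneNystrom W x).PosSemidef :=
  (posSemidef_vecMulVec_self_star _).smul (inv_nonneg.mpr (hW.re_dotProduct_nonneg x))

lemma PosSemidef.sub_rankOneNystrom (hW : W.PosSemidef) (x : n → 𝕜) :
    (W - rankOneNystrom W x).PosSemidef := by
  refine .of_dotProduct_mulVec_nonneg
    (hW.isHermitian.sub (posSemidef_rankOneNystrom hW x).isHermitian) fun y => ?_
  rw [sub_mulVec, dotProduct_sub, dotProduct_rankOneNystrom_mulVec,
    ← hW.ofReal_re_dotProduct_mulVec y, ← ofReal_sub, ofReal_nonneg, sub_nonneg]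
  have hcs := hW.norm_sq_dotProduct_mulVec_le y x
  rcases (hW.re_dotProduct_nonneg x).eq_or_lt with hx | hx
  · simpa [← hx] using hW.re_dotProduct_nonneg y
  · rw [inv_mul_le_iff₀ hx]
    linarith

lemma PosSemidef.dotProduct_rankOneNystrom_mulVec_self (hW : W.PosSemidef) (x : n → 𝕜)
    (hx : re (star x ⬝ᵥ W *ᵥ x) ≠ 0) :
    star x ⬝ᵥ rankOneNystrom W x *ᵥ x = star x ⬝ᵥ W *ᵥ x := by
  have hnorm : ‖star x ⬝ᵥ W *ᵥ x‖ = re (star x ⬝ᵥ W *ᵥ x) := by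
    simpa using congrArg re (norm_of_nonneg' (hW.dotProduct_mulVec_nonneg x))
  rw [dotProduct_rankOneNystrom_mulVec, hnorm]
  conv_rhs => rw [← hW.ofReal_re_dotProduct_mulVec x]
  congr 1
  field_simp

end Matrix

section SampledProblem

variable {m : ℕ} {h : ℝ → Fin m → ℂ} {γc γa σ2 P θc : ℝ} {I : Set ℝ}
  {W W' S : Matrix (Fin m) (Fin m) ℂ}

lemma trace_Hm_mul (h : ℝ → Fin m → ℂ) (θ : ℝ) (M : Matrix (Fin m) (Fin m) ℂ) :
    (Hm h θ * M).trace = star (h θ) ⬝ᵥ M *ᵥ h θ :=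
  trace_vecMulVec_mul _ _ _

lemma re_trace_Hm_mul_le_of_sub (hWW' : (W - W').PosSemidef) (θ : ℝ) :
    (Hm h θ * W').trace.re ≤ (Hm h θ * W).trace.re := by
  have hθ := hWW'.re_dotProduct_nonneg (h θ)
  rw [sub_mulVec, dotProduct_sub, map_sub, sub_nonneg] at hθ
  rwa [trace_Hm_mul, trace_Hm_mul]

lemma mem_F3_of_sub_posSemidef (hmem : (W, S) ∈ F3 h γc γa σ2 P θc I) (hW' : W'.PosSemidef)
    (hWW' : (W - W').PosSemidef) (hc : (Hm h θc * W).trace.re ≤ (Hm h θc * W').trace.re) :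
    (W', S) ∈ F3 h γc γa σ2 P θc I := by
  obtain ⟨-, hS, hclient, hadv, hpow⟩ := hmem
  refine ⟨hW', hS, hclient.trans hc, fun θ hθ => (re_trace_Hm_mul_le_of_sub hWW' θ).trans
    (hadv θ hθ), fun i => ?_⟩
  have hdiag : (W' i i).re ≤ (W i i).re := by
    simpa [sub_nonneg] using (RCLike.nonneg_iff.mp (hWW'.diag_nonneg (i := i))).1
  linarith [hpow i]

lemma re_dotProduct_mulVec_pos_of_mem_F3 (hmem : (W, S) ∈ F3 h γc γa σ2 P θc I)
    (hγc : 0 < γc) (hσ : 0 < σ2) : 0 < (star (h θc) ⬝ᵥ W *ᵥ h θc).re := by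
  obtain ⟨-, hS, hclient, -⟩ := hmem
  have hS_gain : 0 ≤ (Hm h θc * S).trace.re := by
    rw [trace_Hm_mul]
    exact hS.re_dotProduct_nonneg _
  rw [← trace_Hm_mul]
  exact lt_of_lt_of_le (by positivity) hclient

lemma g3_le_of_mem_F3 {p q : Matrix (Fin m) (Fin m) ℂ × Matrix (Fin m) (Fin m) ℂ}
    (hopt : g3 p = sInf (g3 '' F3 h γc γa σ2 P θc I)) (hq : q ∈ F3 h γc γa σ2 P θc I) :
    g3 p ≤ g3 q := by
  have hbdd : BddBelow (g3 '' F3 h γc γa σ2 P θc I) := by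
    refine ⟨0, ?_⟩
    rintro _ ⟨r, hr, rfl⟩
    exact add_nonneg (RCLike.nonneg_iff.mp hr.1.trace_nonneg).1
      (RCLike.nonneg_iff.mp hr.2.1.trace_nonneg).1
  exact hopt ▸ csInf_le hbdd ⟨q, hq, rfl⟩

end SampledProblem

theorem stmt12_general {m : ℕ} (h : ℝ → Fin m → ℂ)
    (γc γa σ2 P θc : ℝ)
    (hγ : γa < γc) (hγa : 0 < γa) (hσ : 0 < σ2)
    (Θ : Set ℝ)
    (Wh Sh : Matrix (Fin m) (Fin m) ℂ)
    (hmem : (Wh, Sh) ∈ F3 h γc γa σ2 P θc Θ)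
    (hopt : g3 (Wh, Sh) = sInf (g3 '' F3 h γc γa σ2 P θc Θ)) :
    Wh.rank = 1 := by
  have hW := hmem.1
  have hgain := re_dotProduct_mulVec_pos_of_mem_F3 hmem (hγa.trans hγ) hσ
  set W' := rankOneNystrom Wh (h θc)
  have hW'mem : (W', Sh) ∈ F3 h γc γa σ2 P θc Θ := by
    refine mem_F3_of_sub_posSemidef hmem (posSemidef_rankOneNystrom hW _)
      (hW.sub_rankOneNystrom _) (le_of_eq ?_)
    rw [trace_Hm_mul, trace_Hm_mul, hW.dotProduct_rankOneNystrom_mulVec_self _ hgain.ne']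
  have htrace : Wh.trace.re ≤ W'.trace.re := by
    simpa [g3] using g3_le_of_mem_F3 hopt hW'mem
  have hWeq : Wh = W' := (hW.sub_rankOneNystrom _).eq_of_sub_of_re_trace_le htrace
  have hWne : Wh ≠ 0 := by
    rintro rfl
    simp at hgain
  exact le_antisymm (hWeq ▸ rank_rankOneNystrom_le _ _) (rank_pos_of_ne_zero hWne)

/-- If the feasible set `F₄(Θ)` of the sampled problem P4
(a finite sample set `Θ ⊆ I`) contains a pair of positive definite matrices,
then every optimal solution `(Ŵ, Σ̂)` of P4 satisfies `rank Ŵ = 1`. -/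
theorem stmt12 {m : ℕ} (hm : 1 ≤ m) (h : ℝ → Fin m → ℂ)
    (γc γa σ2 P θc : ℝ) (I : Set ℝ)
    (hγ : γa < γc) (hγa : 0 < γa) (hσ : 0 < σ2) (hP : 0 < P)
    (Θ : Set ℝ) (hΘfin : Θ.Finite) (hΘI : Θ ⊆ I)
    (hfeas : ∃ p ∈ F3 h γc γa σ2 P θc Θ, p.1.PosDef ∧ p.2.PosDef)
    (Wh Sh : Matrix (Fin m) (Fin m) ℂ)
    (hmem : (Wh, Sh) ∈ F3 h γc γa σ2 P θc Θ)
    (hopt : g3 (Wh, Sh) = sInf (g3 '' F3 h γc γa σ2 P θc Θ)) :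
    Wh.rank = 1 :=
  stmt12_general h γc γa σ2 P θc hγ hγa hσ Θ Wh Sh hmem hopt
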